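/- Let θ be a nonconstant inner function and R_n h = T_{θ̄} h + Σ_{i=1}^n ⟨h, u_i⟩ v_i on H^2 with {u_i} orthonormal, {v_i} orthogonal. Let Λ ⊂ {1,…,n} be the set of k for which θ does not divide u_k (i.e., P_{K_θ} u_k ≠ 0). Then Ker R_n is nearly S*-invariant with defect at most n + |Λ|, with defect space F = span{θ S* v_i (1 ≤ i ≤ n)} ∨ span{P_{K_θ} u_k (k ∈ Λ)}. -/

import Mathlib

open MeasureTheory Complex Real ComplexConjugate
open scoped ENNReal

noncomputable section

instance : Fact (0 < 2 * π) := ⟨by positivity⟩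

/-- The unit circle, modelled as `ℝ / 2πℤ`. -/
abbrev UnitCircle : Type := AddCircle (2 * π)

/-- Normalized Haar (Lebesgue) measure on the circle. -/
abbrev μc : Measure UnitCircle := AddCircle.haarAddCircle

/-- The space `L²(𝕋)`. -/
abbrev L2T : Type := Lp ℂ 2 μc

/-- The Hardy space `H²`, the closed span of `{eⁱⁿᵗ : n ≥ 0}` inside `L²(𝕋)`. -/
def H2 : Submodule ℂ L2T :=
  (Submodule.span ℂ (Set.range fun n : ℕ => (fourierLp 2 (n : ℤ) : L2T))).topologicalClosure

instance : CompleteSpace H2 :=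
  IsComplete.completeSpace_coe (Submodule.isClosed_topologicalClosure _).isComplete

/-- The orthogonal projection `P : L²(𝕋) → H²`. -/
def PH2 : L2T →L[ℂ] H2 := Submodule.orthogonalProjectionOnto H2

/-- Multiplication of an `L²` function by an essentially bounded symbol. -/
def symbMul (g : UnitCircle → ℂ) (hg : MemLp g ∞ μc) (f : L2T) : L2T :=
  ((Lp.memLp f).smul hg).toLp (g • ⇑f)

/-- The Toeplitz operator `T_g f = P(gf)`, viewed as a map `L²(𝕋) → L²(𝕋)`
(its restriction to `H²` is the classical Toeplitz operator). -/
def Toeplitz (g : UnitCircle → ℂ) (hg : MemLp g ∞ μc) (f : L2T) : L2T :=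
  (PH2 (symbMul g hg f) : L2T)

/-- The boundary coordinate function `z = eⁱᵗ` on the circle. -/
def zfun : UnitCircle → ℂ := fun x => fourier 1 x

lemma zfun_memLinfty : MemLp zfun ∞ μc := by
  refine memLp_top_of_bound ((fourier 1).continuous.aestronglyMeasurable) 1 ?_
  filter_upwards with x
  simp [zfun, Circle.norm_coe]

lemma conj_zfun_memLinfty : MemLp (fun x => conj (zfun x)) ∞ μc := by
  refine memLp_top_of_bound (Continuous.aestronglyMeasurable (Complex.continuous_conj.comp ((fourier 1).continuous))) 1 ?_
  filter_upwards with x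
  simp [zfun, Circle.norm_coe]

/-- The backward shift `S* = T_{z̄}` on `L²`; its restriction to `H²` is the classical
backward shift `(S^*f)(z) = (f(z)-f(0))/z`. -/
def Sstar (f : L2T) : L2T := Toeplitz (fun x => conj (zfun x)) conj_zfun_memLinfty f

/-- Evaluation of (the analytic extension of) `f` at the origin: the mean value `f(0) = ∫ f`. -/
def ev0 (f : L2T) : ℂ := ∫ x, f x ∂μc

/-- The constant function `1` as an element of `L²(𝕋)` (it is `e⁰`). -/
def onefun : L2T := fourierLp 2 (0 : ℤ)

lemma zpow_memLinfty (m : ℕ) : MemLp (fun x => zfun x ^ m) ∞ μc := by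
  refine memLp_top_of_bound (Continuous.aestronglyMeasurable (by
    exact Continuous.pow (fourier 1).continuous m)) 1 ?_
  filter_upwards with x
  simp [zfun, Circle.norm_coe]

/-- An essentially bounded symbol is in particular square-integrable: the associated `L²`
element. -/
def toL2 (g : UnitCircle → ℂ) (hg : MemLp g ∞ μc) : L2T :=
  (hg.mono_exponent le_top).toLp g

/-- A bounded symbol `g` is *analytic* (i.e. belongs to `H^∞`) iff multiplication by `g`
preserves the Hardy space `H²`. -/
def IsAnalytic (g : UnitCircle → ℂ) (hg : MemLp g ∞ μc) : Prop :=
  ∀ f : L2T, f ∈ H2 → symbMul g hg f ∈ H2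

/-- A bounded symbol is *inner* if it is analytic and unimodular a.e. on the circle. -/
def IsInner (g : UnitCircle → ℂ) (hg : MemLp g ∞ μc) : Prop :=
  IsAnalytic g hg ∧ ∀ᵐ x ∂μc, ‖g x‖ = 1

/-- The subspace `θ·H²` of `L²(𝕋)`. -/
def mulH2 (θ : UnitCircle → ℂ) (hθ : MemLp θ ∞ μc) : Submodule ℂ L2T :=
  Submodule.span ℂ {f : L2T | ∃ h ∈ H2, f = symbMul θ hθ h}

/-- The model space `K_θ = H² ⊖ θH²`. -/
def Kmodel (θ : UnitCircle → ℂ) (hθ : MemLp θ ∞ μc) : Submodule ℂ L2T :=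
  H2 ⊓ (mulH2 θ hθ)ᗮ

instance (θ : UnitCircle → ℂ) (hθ : MemLp θ ∞ μc) : CompleteSpace (Kmodel θ hθ) := by
  refine IsComplete.completeSpace_coe (IsClosed.isComplete ?_)
  have : ((Kmodel θ hθ : Submodule ℂ L2T) : Set L2T)
      = (H2 : Set L2T) ∩ ((mulH2 θ hθ)ᗮ : Set L2T) := rfl
  rw [this]
  exact (Submodule.isClosed_topologicalClosure _).inter (Submodule.isClosed_orthogonal _)

/-- An element `u ∈ H²` is *outer* if the polynomial multiples of `u` are dense in `H²`
(Beurling). -/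
def IsOuterL2 (uL : L2T) : Prop :=
  (Submodule.span ℂ
    (Set.range fun n : ℕ => symbMul (fun x => zfun x ^ n) (zpow_memLinfty n) uL)).topologicalClosure
    = H2

open scoped ComplexInnerProductSpace

instance (U : Submodule ℂ L2T) : CompleteSpace (H2 ⊓ Uᗮ : Submodule ℂ L2T) := by
  refine IsComplete.completeSpace_coe (IsClosed.isComplete ?_)
  have : ((H2 ⊓ Uᗮ : Submodule ℂ L2T) : Set L2T) = (H2 : Set L2T) ∩ (Uᗮ : Set L2T) := rfl
  rw [this]
  exact (Submodule.isClosed_topologicalClosure _).inter (Submodule.isClosed_orthogonal _)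

/-! ### Auxiliary lemmas -/

lemma symbMul_ae (g : UnitCircle → ℂ) (hg : MemLp g ∞ μc) (f : L2T) :
    symbMul g hg f =ᵐ[μc] fun x => g x * f x := by
  filter_upwards [MemLp.coeFn_toLp ((Lp.memLp f).smul (r := 2) hg)] with x hx
  simpa [symbMul, Pi.smul_apply, smul_eq_mul] using hx

lemma symbMul_add (g : UnitCircle → ℂ) (hg : MemLp g ∞ μc) (f₁ f₂ : L2T) :
    symbMul g hg (f₁ + f₂) = symbMul g hg f₁ + symbMul g hg f₂ := by
  apply Lp.ext
  filter_upwards [symbMul_ae g hg (f₁ + f₂), symbMul_ae g hg f₁, symbMul_ae g hg f₂,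
    Lp.coeFn_add f₁ f₂, Lp.coeFn_add (symbMul g hg f₁) (symbMul g hg f₂)] with x h1 h2 h3 h4 h5
  rw [h1, h5, Pi.add_apply, h2, h3, h4, Pi.add_apply, mul_add]

lemma symbMul_smul (g : UnitCircle → ℂ) (hg : MemLp g ∞ μc) (c : ℂ) (f : L2T) :
    symbMul g hg (c • f) = c • symbMul g hg f := by
  apply Lp.ext
  filter_upwards [symbMul_ae g hg (c • f), symbMul_ae g hg f,
    Lp.coeFn_smul c f, Lp.coeFn_smul c (symbMul g hg f)] with x h1 h2 h3 h4
  rw [h1, h4, Pi.smul_apply, h2, h3, Pi.smul_apply, smul_eq_mul, smul_eq_mul]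
  ring

lemma symbMul_comm (g₁ g₂ : UnitCircle → ℂ) (hg₁ : MemLp g₁ ∞ μc) (hg₂ : MemLp g₂ ∞ μc)
    (f : L2T) : symbMul g₁ hg₁ (symbMul g₂ hg₂ f) = symbMul g₂ hg₂ (symbMul g₁ hg₁ f) := by
  apply Lp.ext
  filter_upwards [symbMul_ae g₁ hg₁ (symbMul g₂ hg₂ f), symbMul_ae g₂ hg₂ f,
    symbMul_ae g₂ hg₂ (symbMul g₁ hg₁ f), symbMul_ae g₁ hg₁ f] with x h1 h2 h3 h4
  rw [h1, h2, h3, h4]; ring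

lemma inner_symbMul (g : UnitCircle → ℂ) (hg : MemLp g ∞ μc)
    (hgc : MemLp (fun x => conj (g x)) ∞ μc) (f₁ f₂ : L2T) :
    ⟪symbMul g hg f₁, f₂⟫ = ⟪f₁, symbMul (fun x => conj (g x)) hgc f₂⟫ := by
  rw [MeasureTheory.L2.inner_def, MeasureTheory.L2.inner_def]
  apply integral_congr_ae
  filter_upwards [symbMul_ae g hg f₁, symbMul_ae (fun x => conj (g x)) hgc f₂] with x h1 h2
  simp only [h1, h2, RCLike.inner_apply, map_mul, Complex.conj_conj]
  ring

lemma symbMul_conj_self (θ : UnitCircle → ℂ) (hθ : MemLp θ ∞ μc)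
    (hθc : MemLp (fun x => conj (θ x)) ∞ μc) (hmod : ∀ᵐ x ∂μc, ‖θ x‖ = 1) (f : L2T) :
    symbMul (fun x => conj (θ x)) hθc (symbMul θ hθ f) = f := by
  apply Lp.ext
  filter_upwards [symbMul_ae (fun x => conj (θ x)) hθc (symbMul θ hθ f),
    symbMul_ae θ hθ f, hmod] with x h1 h2 h3
  rw [h1, h2, ← mul_assoc]
  have : conj (θ x) * θ x = 1 := by
    rw [mul_comm, Complex.mul_conj]
    norm_cast
    rw [Complex.normSq_eq_norm_sq]
    simp [h3]
  rw [this, one_mul]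

lemma inner_H2_zero (x : L2T) (hgen : ∀ m : ℤ, 0 ≤ m → ⟪x, (fourierLp 2 m : L2T)⟫ = 0) :
    ∀ f ∈ H2, ⟪x, f⟫ = 0 := by
  have hle : H2 ≤ LinearMap.ker ((innerSL ℂ x : L2T →L[ℂ] ℂ) : L2T →ₗ[ℂ] ℂ) := by
    apply Submodule.topologicalClosure_minimal
    · rw [Submodule.span_le]
      rintro _ ⟨n, rfl⟩
      simpa using hgen n (Int.ofNat_nonneg n)
    · exact ContinuousLinearMap.isClosed_ker _
  intro f hf
  simpa using hle hf

lemma fourierLp_mem_H2 {m : ℤ} (hm : 0 ≤ m) : (fourierLp 2 m : L2T) ∈ H2 := by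
  apply Submodule.le_topologicalClosure
  apply Submodule.subset_span
  exact ⟨m.toNat, by simp [Int.toNat_of_nonneg hm]⟩

lemma mem_H2_iff (f : L2T) : f ∈ H2 ↔ ∀ m : ℤ, m < 0 → ⟪(fourierLp 2 m : L2T), f⟫ = 0 := by
  constructor
  · intro hf m hm
    exact inner_H2_zero (fourierLp 2 m)
      (fun n hn => orthonormal_fourier.2 (by omega)) f hf
  · intro hc
    show f ∈ closure (↑(Submodule.span ℂ (Set.range fun n : ℕ => (fourierLp 2 (n : ℤ) : L2T))) :
      Set L2T)
    refine mem_closure_of_tendsto (HilbertBasis.hasSum_repr fourierBasis f)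
      (Filter.Eventually.of_forall fun s => ?_)
    refine Submodule.sum_mem _ fun i _ => ?_
    by_cases hi : 0 ≤ i
    · refine Submodule.smul_mem _ _ (Submodule.subset_span ⟨i.toNat, ?_⟩)
      rw [coe_fourierBasis]
      simp [Int.toNat_of_nonneg hi]
    · have h0 : fourierBasis.repr f i = 0 := by
        rw [HilbertBasis.repr_apply_apply, coe_fourierBasis]
        exact hc i (by omega)
      simp [h0]

lemma PH2_eq_zero_iff (x : L2T) : PH2 x = 0 ↔ ∀ f ∈ H2, ⟪f, x⟫ = 0 := by
  show Submodule.orthogonalProjectionOnto H2 x = 0 ↔ _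
  rw [Submodule.orthogonalProjectionOnto_eq_zero_iff, Submodule.mem_orthogonal]

lemma PH2_eq_zero_of_coeffs (x : L2T)
    (h : ∀ m : ℤ, 0 ≤ m → ⟪(fourierLp 2 m : L2T), x⟫ = 0) : PH2 x = 0 :=
  (PH2_eq_zero_iff x).2 fun f hf =>
    inner_eq_zero_symm.1 (inner_H2_zero x (fun m hm => inner_eq_zero_symm.1 (h m hm)) f hf)

lemma PH2_coe_eq {x : L2T} (hx : x ∈ H2) : (PH2 x : L2T) = x :=
  Submodule.starProjection_eq_self_iff.2 hx

lemma inner_fourier_symbMul_conj_z (f : L2T) (m : ℤ) :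
    ⟪(fourierLp 2 m : L2T), symbMul (fun x => conj (zfun x)) conj_zfun_memLinfty f⟫
      = ⟪(fourierLp 2 (m + 1) : L2T), f⟫ := by
  rw [MeasureTheory.L2.inner_def, MeasureTheory.L2.inner_def]
  apply integral_congr_ae
  filter_upwards [symbMul_ae _ conj_zfun_memLinfty f, coeFn_fourierLp 2 m,
    coeFn_fourierLp 2 (m + 1)] with x h1 h2 h3
  rw [RCLike.inner_apply, RCLike.inner_apply, h1, h2, h3]
  simp only [zfun]
  rw [fourier_add, map_mul]
  ring

lemma inner_one_eq_ev0 (f : L2T) : ⟪(fourierLp 2 (0 : ℤ) : L2T), f⟫ = ev0 f := by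
  rw [MeasureTheory.L2.inner_def, ev0]
  apply integral_congr_ae
  filter_upwards [coeFn_fourierLp 2 (0 : ℤ)] with x h
  rw [RCLike.inner_apply, h]
  simp

/-- The Toeplitz operator bundled as a linear map on `L²`. -/
def ToeplitzLM (g : UnitCircle → ℂ) (hg : MemLp g ∞ μc) : L2T →ₗ[ℂ] L2T where
  toFun := Toeplitz g hg
  map_add' f₁ f₂ := by simp [Toeplitz, symbMul_add, map_add]
  map_smul' c f := by simp [Toeplitz, symbMul_smul, _root_.map_smul]

lemma Toeplitz_eq (g : UnitCircle → ℂ) (hg : MemLp g ∞ μc) (f : L2T) :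
    Toeplitz g hg f = ToeplitzLM g hg f := rfl

lemma Sstar_eq (f : L2T) :
    Sstar f = ToeplitzLM (fun x => conj (zfun x)) conj_zfun_memLinfty f := rfl

lemma Sstar_mem_H2 (f : L2T) : Sstar f ∈ H2 := SetLike.coe_mem _

lemma Sstar_eq_symbMul {f : L2T} (hf : f ∈ H2) (h0 : ev0 f = 0) :
    Sstar f = symbMul (fun x => conj (zfun x)) conj_zfun_memLinfty f := by
  apply PH2_coe_eq
  rw [mem_H2_iff]
  intro m hm
  rw [inner_fourier_symbMul_conj_z]
  rcases lt_or_eq_of_le (by omega : m + 1 ≤ 0) with h | h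
  · exact (mem_H2_iff f).1 hf _ h
  · rw [h, inner_one_eq_ev0, h0]

lemma PH2_symbMul_conj_z_of_orthogonal {r : L2T} (hr : r ∈ H2ᗮ) :
    PH2 (symbMul (fun x => conj (zfun x)) conj_zfun_memLinfty r) = 0 := by
  apply PH2_eq_zero_of_coeffs
  intro m hm
  rw [inner_fourier_symbMul_conj_z]
  exact (Submodule.mem_orthogonal H2 r).1 hr _ (fourierLp_mem_H2 (by omega))

lemma inner_span_zero {s : Set L2T} {x : L2T} (h : ∀ v ∈ s, ⟪v, x⟫ = 0) :
    ∀ v ∈ Submodule.span ℂ s, ⟪v, x⟫ = 0 := by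
  intro v hv
  induction hv using Submodule.span_induction with
  | mem v hv => exact h v hv
  | zero => exact inner_zero_left x
  | add a b _ _ ha hb => rw [inner_add_left, ha, hb, add_zero]
  | smul c a _ ha => rw [inner_smul_left, ha, mul_zero]

lemma mem_mulH2_orthogonal_iff (θ : UnitCircle → ℂ) (hθ : MemLp θ ∞ μc) (x : L2T) :
    x ∈ (mulH2 θ hθ)ᗮ ↔ ∀ h ∈ H2, ⟪symbMul θ hθ h, x⟫ = 0 := by
  rw [Submodule.mem_orthogonal]
  constructor
  · intro hx h hh
    exact hx _ (Submodule.subset_span ⟨h, hh, rfl⟩)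
  · intro hx u hu
    refine inner_span_zero ?_ u hu
    rintro v ⟨h, hh, rfl⟩
    exact hx h hh

lemma mem_Kmodel_of (θ : UnitCircle → ℂ) (hθ : MemLp θ ∞ μc)
    (hθc : MemLp (fun x => conj (θ x)) ∞ μc) {f : L2T} (hf : f ∈ H2)
    (h0 : PH2 (symbMul (fun x => conj (θ x)) hθc f) = 0) : f ∈ Kmodel θ hθ := by
  refine ⟨hf, (mem_mulH2_orthogonal_iff θ hθ f).2 fun h hh => ?_⟩
  rw [inner_symbMul θ hθ hθc]
  exact (PH2_eq_zero_iff _).1 h0 h hh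

lemma PH2_eq_zero_of_mem_Kmodel (θ : UnitCircle → ℂ) (hθ : MemLp θ ∞ μc)
    (hθc : MemLp (fun x => conj (θ x)) ∞ μc) {f : L2T} (hf : f ∈ Kmodel θ hθ) :
    PH2 (symbMul (fun x => conj (θ x)) hθc f) = 0 := by
  refine (PH2_eq_zero_iff _).2 fun h hh => ?_
  rw [← inner_symbMul θ hθ hθc]
  exact (mem_mulH2_orthogonal_iff θ hθ f).1 hf.2 h hh

lemma Kmodel_le_H2 (θ : UnitCircle → ℂ) (hθ : MemLp θ ∞ μc) : Kmodel θ hθ ≤ H2 :=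
  inf_le_left

lemma Toeplitz_Sstar_comm (g : UnitCircle → ℂ) (hg : MemLp g ∞ μc) {h : L2T}
    (hh : h ∈ H2) (h0 : ev0 h = 0) :
    Toeplitz g hg (Sstar h) = Sstar (Toeplitz g hg h) := by
  have hr : symbMul g hg h - Toeplitz g hg h ∈ H2ᗮ :=
    Submodule.sub_starProjection_mem_orthogonal (K := H2) (symbMul g hg h)
  show (PH2 (symbMul g hg (Sstar h)) : L2T) = Sstar (Toeplitz g hg h)
  rw [Sstar_eq_symbMul hh h0, symbMul_comm]
  have hdec : symbMul g hg h = Toeplitz g hg h + (symbMul g hg h - Toeplitz g hg h) := by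
    rw [add_sub_cancel]
  rw [hdec, symbMul_add, map_add, PH2_symbMul_conj_z_of_orthogonal hr, add_zero]
  rfl


/-- For `θ` a nonconstant inner function and
`Rₙh = T_θ̄ h + Σ ⟨h,uᵢ⟩vᵢ`, with `Λ = {k : P_{K_θ} u_k ≠ 0}`, the kernel of `Rₙ` is nearly
`S*`-invariant with defect at most `n + |Λ|`, with defect space
`F = span({θ S*vᵢ} ∪ {P_{K_θ} u_k : k ∈ Λ})`. -/
theorem kernel_perturbed_conjugate_toeplitz_nearly_Sstar_invariant
    (n : ℕ) (θ : UnitCircle → ℂ) (hθ : MemLp θ ∞ μc) (hin : IsInner θ hθ)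
    (hnc : ∀ c : ℂ, ¬ (θ =ᵐ[μc] fun _ => c))
    (hθc : MemLp (fun x => conj (θ x)) ∞ μc)
    (u v : Fin n → L2T)
    (hu : ∀ i, u i ∈ H2) (huon : Orthonormal ℂ u)
    (hv : ∀ i, v i ∈ H2) (hvorth : ∀ i j, i ≠ j → ⟪v i, v j⟫ = 0) :
    Module.finrank ℂ
        (Submodule.span ℂ
          ((Set.range fun i => symbMul θ hθ (Sstar (v i)))
            ∪ ((fun k => ((Submodule.orthogonalProjectionOnto (Kmodel θ hθ) (u k) : Kmodel θ hθ) : L2T)) ''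
                {k : Fin n | ((Submodule.orthogonalProjectionOnto (Kmodel θ hθ) (u k) : Kmodel θ hθ) : L2T) ≠ 0})))
      ≤ n + {k : Fin n | ((Submodule.orthogonalProjectionOnto (Kmodel θ hθ) (u k) : Kmodel θ hθ) : L2T) ≠ 0}.ncard
    ∧ ∀ h ∈ H2,
        (Toeplitz (fun x => conj (θ x)) hθc h + ∑ i, ⟪u i, h⟫ • v i = 0) → ev0 h = 0 →
        ∃ w ∈ Submodule.span ℂ
            ((Set.range fun i => symbMul θ hθ (Sstar (v i)))
              ∪ ((fun k => ((Submodule.orthogonalProjectionOnto (Kmodel θ hθ) (u k) : Kmodel θ hθ) : L2T)) ''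
                  {k : Fin n | ((Submodule.orthogonalProjectionOnto (Kmodel θ hθ) (u k) : Kmodel θ hθ) : L2T) ≠ 0})),
          Sstar h + w ∈ H2
          ∧ Toeplitz (fun x => conj (θ x)) hθc (Sstar h + w)
              + ∑ i, ⟪u i, Sstar h + w⟫ • v i = 0 := by
  classical
  obtain ⟨hana, hmod⟩ := hin
  set PK : Fin n → L2T :=
    fun k => ((Submodule.orthogonalProjectionOnto (Kmodel θ hθ) (u k) : Kmodel θ hθ) : L2T) with hPKdef
  constructor
  · -- finrank bound
    rw [Submodule.span_union]
    haveI h1 : FiniteDimensional ℂ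
        (Submodule.span ℂ (Set.range fun i => symbMul θ hθ (Sstar (v i)))) :=
      FiniteDimensional.span_of_finite ℂ (Set.finite_range _)
    haveI h2 : FiniteDimensional ℂ (Submodule.span ℂ (PK '' {k | PK k ≠ 0})) :=
      FiniteDimensional.span_of_finite ℂ ((Set.toFinite _).image _)
    refine le_trans (Submodule.finrank_add_le_finrank_add_finrank _ _) (add_le_add ?_ ?_)
    · simpa [Set.finrank] using finrank_range_le_card (R := ℂ) fun i => symbMul θ hθ (Sstar (v i))
    · haveI := (Set.toFinite (PK '' {k | PK k ≠ 0})).fintype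
      refine le_trans (finrank_span_le_card _) ?_
      rw [← Set.ncard_eq_toFinset_card']
      exact Set.ncard_image_le (Set.toFinite _)
  · intro h hh hker h0
    set g := Sstar h with hgdef
    set c : Fin n → ℂ := fun i => ⟪u i, h⟫ with hcdef
    set w₁ : L2T := ∑ i, c i • symbMul θ hθ (Sstar (v i)) with hw1
    have hT : Toeplitz (fun x => conj (θ x)) hθc h = -∑ i, c i • v i :=
      eq_neg_of_add_eq_zero_left hker
    have hTg : Toeplitz (fun x => conj (θ x)) hθc g = -∑ i, c i • Sstar (v i) := by
      rw [hgdef, Toeplitz_Sstar_comm _ hθc hh h0, hT]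
      simp only [Sstar_eq, map_neg, map_sum, _root_.map_smul]
    have hK1 : g + w₁ ∈ Kmodel θ hθ := by
      apply mem_Kmodel_of θ hθ hθc
      · exact Submodule.add_mem _ (Sstar_mem_H2 h)
          (Submodule.sum_mem _ fun i _ =>
            Submodule.smul_mem _ _ (hana _ (Sstar_mem_H2 (v i))))
      · apply ZeroMemClass.coe_eq_zero.1
        show Toeplitz (fun x => conj (θ x)) hθc (g + w₁) = 0
        rw [Toeplitz_eq, map_add, ← Toeplitz_eq, hTg]
        have hw1T : ToeplitzLM (fun x => conj (θ x)) hθc w₁ = ∑ i, c i • Sstar (v i) := by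
          rw [hw1, map_sum]
          refine Finset.sum_congr rfl fun i _ => ?_
          rw [_root_.map_smul]
          congr 1
          show (PH2 (symbMul (fun x => conj (θ x)) hθc (symbMul θ hθ (Sstar (v i)))) : L2T)
            = Sstar (v i)
          rw [symbMul_conj_self θ hθ hθc hmod]
          exact PH2_coe_eq (Sstar_mem_H2 (v i))
        rw [hw1T, neg_add_cancel]
    set G : Submodule ℂ L2T := Submodule.span ℂ (PK '' {k | PK k ≠ 0}) with hGdef
    haveI : FiniteDimensional ℂ G := FiniteDimensional.span_of_finite ℂ ((Set.toFinite _).image _)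
    haveI : CompleteSpace G := FiniteDimensional.complete ℂ G
    set w₂ : L2T := -(Submodule.orthogonalProjectionOnto G (g + w₁) : L2T) with hw2
    have hGsubK : G ≤ Kmodel θ hθ := by
      rw [hGdef, Submodule.span_le]
      rintro _ ⟨k, -, rfl⟩
      exact SetLike.coe_mem _
    have hw2G : w₂ ∈ G := neg_mem (SetLike.coe_mem _)
    have heq : g + (w₁ + w₂) = g + w₁ + w₂ := (add_assoc _ _ _).symm
    have hq : g + w₁ + w₂ ∈ Kmodel θ hθ := Submodule.add_mem _ hK1 (hGsubK hw2G)
    have hcoef : ∀ i, ⟪u i, g + w₁ + w₂⟫ = 0 := by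
      intro i
      have hsplit : u i = PK i + (u i - PK i) := (add_sub_cancel _ _).symm
      have h2 : ⟪u i - PK i, g + w₁ + w₂⟫ = 0 := by
        have hmem : u i - PK i ∈ (Kmodel θ hθ)ᗮ :=
          Submodule.sub_starProjection_mem_orthogonal (K := Kmodel θ hθ) (u i)
        exact inner_eq_zero_symm.1 ((Submodule.mem_orthogonal _ _).1 hmem _ hq)
      have h1 : ⟪PK i, g + w₁ + w₂⟫ = 0 := by
        by_cases hz : PK i = 0
        · rw [hz, inner_zero_left]
        · have hPKG : PK i ∈ G := Submodule.subset_span ⟨i, hz, rfl⟩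
          have hrw : g + w₁ + w₂ = (g + w₁) - (Submodule.orthogonalProjectionOnto G (g + w₁) : L2T) := by
            rw [hw2, ← sub_eq_add_neg]
          rw [hrw]
          exact (Submodule.mem_orthogonal G _).1
            (Submodule.sub_starProjection_mem_orthogonal (K := G) (g + w₁)) _ hPKG
      calc ⟪u i, g + w₁ + w₂⟫ = ⟪PK i + (u i - PK i), g + w₁ + w₂⟫ := by rw [← hsplit]
        _ = 0 := by rw [inner_add_left, h1, h2, add_zero]
    refine ⟨w₁ + w₂, ?_, ?_, ?_⟩
    · apply Submodule.add_mem
      · refine Submodule.sum_mem _ fun i _ => Submodule.smul_mem _ _ ?_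
        exact Submodule.span_mono Set.subset_union_left (Submodule.subset_span ⟨i, rfl⟩)
      · exact Submodule.span_mono Set.subset_union_right hw2G
    · rw [heq]
      exact Kmodel_le_H2 θ hθ hq
    · rw [heq]
      have hT0 : Toeplitz (fun x => conj (θ x)) hθc (g + w₁ + w₂) = 0 := by
        show (PH2 _ : L2T) = 0
        rw [PH2_eq_zero_of_mem_Kmodel θ hθ hθc hq]
        simp
      rw [hT0]
      simp [hcoef]
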